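/- Let n ∈ {1,2,3}, a₁ = -1, a₃ = 1, a₂ ∈ ℝ, and let J and K be as in the Nehari setting (J(v) = (1/4)‖∇v‖² + (1/12)‖v‖³_{L³} + (1/20)‖v‖⁵_{L⁵}, K(v) = ‖∇v‖² + ‖v‖³_{L³} - a₂‖v‖⁴_{L⁴} - ‖v‖⁵_{L⁵}). If v ∈ X\{0} satisfies K(v) < 0, then μ < J(v), where μ = inf{J(w) : w ∈ X\{0}, K(w) = 0}. In particular μ = inf{J(v) : v ∈ X\{0}, K(v) ≤ 0}. -/

import Mathlib

open MeasureTheory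

noncomputable def gradSq (n : ℕ) (v : EuclideanSpace ℝ (Fin n) → ℝ) : ℝ :=
  ∫ x, ‖fderiv ℝ v x‖^2

noncomputable def lpP (n : ℕ) (p : ℕ) (v : EuclideanSpace ℝ (Fin n) → ℝ) : ℝ :=
  ∫ x, |v x| ^ p

/-- Nehari functional `K`. -/
noncomputable def Kf (n : ℕ) (a₂ : ℝ) (v : EuclideanSpace ℝ (Fin n) → ℝ) : ℝ :=
  gradSq n v + lpP n 3 v - a₂ * lpP n 4 v - lpP n 5 v

noncomputable def Jf (n : ℕ) (v : EuclideanSpace ℝ (Fin n) → ℝ) : ℝ :=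
  (1/4) * gradSq n v + (1/12) * lpP n 3 v + (1/20) * lpP n 5 v

/-- Action functional `S`. -/
noncomputable def Sf (n : ℕ) (a₂ : ℝ) (v : EuclideanSpace ℝ (Fin n) → ℝ) : ℝ :=
  (1/2) * gradSq n v + (1/3) * lpP n 3 v - (a₂/4) * lpP n 4 v - (1/5) * lpP n 5 v

/-- Pohozhaev functional `P`. -/
noncomputable def Pf (n : ℕ) (a₂ : ℝ) (v : EuclideanSpace ℝ (Fin n) → ℝ) : ℝ :=
  gradSq n v + ((n : ℝ)/6) * lpP n 3 v - ((n : ℝ) * a₂/4) * lpP n 4 v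
    - (3 * (n : ℝ)/10) * lpP n 5 v

/-- Membership in `X = Ḣ¹ ∩ L³` together with the integrabilities needed to make
all the functionals well defined. -/
def Adm (n : ℕ) (v : EuclideanSpace ℝ (Fin n) → ℝ) : Prop :=
  Differentiable ℝ v ∧ MemLp (fun x => ‖fderiv ℝ v x‖) 2 volume ∧
    MemLp v 3 volume ∧ MemLp v 4 volume ∧ MemLp v 5 volume

/-- The rescaling `v^λ(x) = λ^{n/2} v (λ x)`. -/
noncomputable def scal (n : ℕ) (l : ℝ) (v : EuclideanSpace ℝ (Fin n) → ℝ) :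
    EuclideanSpace ℝ (Fin n) → ℝ :=
  fun x => l ^ ((n : ℝ)/2) * v (l • x)

/-! Along the ray `c ↦ c • v`, `K (c • v) = c² ‖∇v‖² + c³ ‖v‖₃³ - a₂ c⁴ ‖v‖₄⁴ - c⁵ ‖v‖₅⁵` is
positive for small `c > 0` (the cubic term dominates since `v ≠ 0`) and negative at `c = 1`, so it
vanishes at some `c ∈ (0, 1)`; and `J (c • v)` is strictly increasing in `c`. -/

open Set Filter Topology

lemma exists_mem_Ioo_eq_zero_of_eventually_pos {f : ℝ → ℝ} (hf : Continuous f)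
    (h0 : ∀ᶠ c in 𝓝[>] 0, 0 < f c) (h1 : f 1 < 0) : ∃ c ∈ Ioo 0 1, f c = 0 := by
  obtain ⟨δ, hfδ, hδ⟩ := (h0.and (Ioo_mem_nhdsGT one_pos)).exists
  obtain ⟨c, hc, hfc⟩ := intermediate_value_Ioo' hδ.2.le hf.continuousOn ⟨h1, hfδ⟩
  exact ⟨c, ⟨hδ.1.trans hc.1, hc.2⟩, hfc⟩

lemma eventually_pos_of_quadratic_nonneg_of_cubic_pos {A B C D a : ℝ} (hA : 0 ≤ A) (hB : 0 < B) :
    ∀ᶠ c in 𝓝[>] 0, 0 < c ^ 2 * A + c ^ 3 * B - a * (c ^ 4 * C) - c ^ 5 * D := by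
  have hq : ∀ᶠ c in 𝓝 (0 : ℝ), 0 < B - a * c * C - c ^ 2 * D :=
    (Continuous.tendsto (by fun_prop) 0).eventually (lt_mem_nhds (by simpa using hB))
  filter_upwards [nhdsWithin_le_nhds hq, self_mem_nhdsWithin] with c hqc (hc : 0 < c)
  have : c ^ 2 * A + c ^ 3 * B - a * (c ^ 4 * C) - c ^ 5 * D
      = c ^ 2 * A + c ^ 3 * (B - a * c * C - c ^ 2 * D) := by ring
  rw [this]
  positivity

section Functionals

variable {n : ℕ}

lemma lpP_nonneg (p : ℕ) (v : EuclideanSpace ℝ (Fin n) → ℝ) : 0 ≤ lpP n p v :=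
  integral_nonneg fun _ => by positivity

lemma gradSq_nonneg (v : EuclideanSpace ℝ (Fin n) → ℝ) : 0 ≤ gradSq n v :=
  integral_nonneg fun _ => by positivity

lemma Jf_nonneg (v : EuclideanSpace ℝ (Fin n) → ℝ) : 0 ≤ Jf n v := by
  unfold Jf
  have := gradSq_nonneg v
  have := lpP_nonneg 3 v
  have := lpP_nonneg 5 v
  positivity

lemma lpP_pos {p : ℕ} (hp : p ≠ 0) {v : EuclideanSpace ℝ (Fin n) → ℝ} (hcont : Continuous v)
    (hv : MemLp v p volume) (hv0 : v ≠ 0) : 0 < lpP n p v := by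
  obtain ⟨x₀, hx₀⟩ : ∃ x, v x ≠ 0 := by simpa [funext_iff] using hv0
  have hint : Integrable (fun x => |v x| ^ p) volume := by
    simpa [← Real.rpow_natCast] using
      hv.integrable_norm_rpow (by exact_mod_cast hp) ENNReal.coe_ne_top
  rw [lpP, integral_pos_iff_support_of_nonneg (fun _ => by positivity) hint]
  have hsupp : Function.support (fun x => |v x| ^ p) = {x | v x ≠ 0} := by
    ext x
    simp [hp]
  rw [hsupp]
  exact (isOpen_compl_singleton.preimage hcont).measure_pos volume ⟨x₀, hx₀⟩

lemma lpP_smul (p : ℕ) (c : ℝ) (v : EuclideanSpace ℝ (Fin n) → ℝ) :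
    lpP n p (c • v) = |c| ^ p * lpP n p v := by
  simp only [lpP, Pi.smul_apply, smul_eq_mul, abs_mul, mul_pow, integral_const_mul]

lemma norm_fderiv_smul {v : EuclideanSpace ℝ (Fin n) → ℝ} (hv : Differentiable ℝ v) (c : ℝ)
    (x : EuclideanSpace ℝ (Fin n)) : ‖fderiv ℝ (c • v) x‖ = |c| * ‖fderiv ℝ v x‖ := by
  rw [fderiv_const_smul (hv x), norm_smul, Real.norm_eq_abs]

lemma gradSq_smul {v : EuclideanSpace ℝ (Fin n) → ℝ} (hv : Differentiable ℝ v) (c : ℝ) :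
    gradSq n (c • v) = c ^ 2 * gradSq n v := by
  simp only [gradSq, norm_fderiv_smul hv, mul_pow, sq_abs, integral_const_mul]

lemma Adm.smul {v : EuclideanSpace ℝ (Fin n) → ℝ} (hv : Adm n v) (c : ℝ) : Adm n (c • v) := by
  obtain ⟨hdiff, hgrad, h3, h4, h5⟩ := hv
  refine ⟨hdiff.const_smul c, ?_, h3.const_smul c, h4.const_smul c, h5.const_smul c⟩
  simpa only [norm_fderiv_smul hdiff] using hgrad.const_mul |c|

lemma Kf_smul {v : EuclideanSpace ℝ (Fin n) → ℝ} (hv : Differentiable ℝ v) (a₂ : ℝ) {c : ℝ}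
    (hc : 0 ≤ c) : Kf n a₂ (c • v) = c ^ 2 * gradSq n v + c ^ 3 * lpP n 3 v
      - a₂ * (c ^ 4 * lpP n 4 v) - c ^ 5 * lpP n 5 v := by
  simp only [Kf, gradSq_smul hv, lpP_smul, abs_of_nonneg hc]

lemma Jf_smul_lt {v : EuclideanSpace ℝ (Fin n) → ℝ} (hv : Differentiable ℝ v)
    (h3 : 0 < lpP n 3 v) {c : ℝ} (hc : c ∈ Ioo 0 1) : Jf n (c • v) < Jf n v := by
  simp only [Jf, gradSq_smul hv, lpP_smul, abs_of_pos hc.1]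
  have h2 : c ^ 2 ≤ 1 := pow_le_one₀ hc.1.le hc.2.le
  have h3' : c ^ 3 < 1 := pow_lt_one₀ hc.1.le hc.2 (by norm_num)
  have h5 : c ^ 5 ≤ 1 := pow_le_one₀ hc.1.le hc.2.le
  nlinarith [gradSq_nonneg v, lpP_nonneg 5 v]

lemma exists_nehari_Jf_lt {a₂ : ℝ} {v : EuclideanSpace ℝ (Fin n) → ℝ} (hv : Adm n v)
    (hv0 : v ≠ 0) (hK : Kf n a₂ v < 0) :
    ∃ w, Adm n w ∧ w ≠ 0 ∧ Kf n a₂ w = 0 ∧ Jf n w < Jf n v := by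
  have h3 : 0 < lpP n 3 v := lpP_pos three_ne_zero hv.1.continuous hv.2.2.1 hv0
  obtain ⟨c, hc, hKc⟩ := exists_mem_Ioo_eq_zero_of_eventually_pos
    (f := fun c => c ^ 2 * gradSq n v + c ^ 3 * lpP n 3 v
      - a₂ * (c ^ 4 * lpP n 4 v) - c ^ 5 * lpP n 5 v)
    (by fun_prop) (eventually_pos_of_quadratic_nonneg_of_cubic_pos (gradSq_nonneg v) h3) (by simpa [Kf] using hK)
  refine ⟨c • v, hv.smul c, smul_ne_zero hc.1.ne' hv0, ?_, Jf_smul_lt hv.1 h3 hc⟩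
  rwa [Kf_smul hv.1 a₂ hc.1.le]

lemma exists_nehari_Jf_le {a₂ : ℝ} {v : EuclideanSpace ℝ (Fin n) → ℝ} (hv : Adm n v)
    (hv0 : v ≠ 0) (hK : Kf n a₂ v ≤ 0) :
    ∃ w, Adm n w ∧ w ≠ 0 ∧ Kf n a₂ w = 0 ∧ Jf n w ≤ Jf n v := by
  rcases hK.lt_or_eq with hK | hK
  · obtain ⟨w, hw, hw0, hKw, hJw⟩ := exists_nehari_Jf_lt hv hv0 hK
    exact ⟨w, hw, hw0, hKw, hJw.le⟩
  · exact ⟨v, hv, hv0, hK, le_rfl⟩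

end Functionals

theorem stmt9 (n : ℕ) (a₂ : ℝ)
    (μ : ℝ)
    (hμ : μ = sInf {r : ℝ | ∃ w : EuclideanSpace ℝ (Fin n) → ℝ,
      Adm n w ∧ w ≠ 0 ∧ Kf n a₂ w = 0 ∧ r = Jf n w})
    (v : EuclideanSpace ℝ (Fin n) → ℝ) (hv : Adm n v) (hv0 : v ≠ 0)
    (hK : Kf n a₂ v < 0) :
    μ < Jf n v ∧
      μ = sInf {r : ℝ | ∃ w : EuclideanSpace ℝ (Fin n) → ℝ,
        Adm n w ∧ w ≠ 0 ∧ Kf n a₂ w ≤ 0 ∧ r = Jf n w} := by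
  subst hμ
  obtain ⟨w, hw, hw0, hKw, hJw⟩ := exists_nehari_Jf_lt hv hv0 hK
  have hbdd : BddBelow {r : ℝ | ∃ w : EuclideanSpace ℝ (Fin n) → ℝ,
      Adm n w ∧ w ≠ 0 ∧ Kf n a₂ w = 0 ∧ r = Jf n w} :=
    ⟨0, fun _ ⟨w, _, _, _, hr⟩ => hr ▸ Jf_nonneg w⟩
  refine ⟨(csInf_le hbdd ⟨w, hw, hw0, hKw, rfl⟩).trans_lt hJw, ?_⟩
  apply csInf_eq_csInf_of_forall_exists_le
  · rintro _ ⟨u, hu, hu0, hKu, rfl⟩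
    exact ⟨Jf n u, ⟨u, hu, hu0, hKu.le, rfl⟩, le_rfl⟩
  · rintro _ ⟨u, hu, hu0, hKu, rfl⟩
    obtain ⟨u', hu', hu'0, hKu', hJu'⟩ := exists_nehari_Jf_le hu hu0 hKu
    exact ⟨Jf n u', ⟨u', hu', hu'0, hKu', rfl⟩, hJu'⟩
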